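/- arXiv:2206.10185 — 2 statements merged into one kernel-verified Lean document; each statement's English description precedes it below -/
import Mathlib

section
/- Let γ ∈ (0,1), n ≥ 1, and let P be a row-stochastic |S| × |S| matrix, and let D be a diagonal matrix with diagonal entries μ(s) ∈ (0,1] with min_s μ(s) = μ_min > 0. Then the map Ḡ(θ) = θ + γ^{n+1} D P^{n+1} θ − D θ is a contraction in the sup-norm with contraction factor 1 − μ_min(1 − γ^{n+1}): for all θ₁, θ₂, ‖Ḡ(θ₁) − Ḡ(θ₂)‖_∞ ≤ (1 − μ_min(1 − γ^{n+1})) ‖θ₁ − θ₂‖_∞. -/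
lemma pow_stochastic {S : Type*} [Fintype S] [DecidableEq S]
    (P : Matrix S S ℝ) (hP_nonneg : ∀ s s', 0 ≤ P s s')
    (hP_row : ∀ s, ∑ s', P s s' = 1) (k : ℕ) :
    (∀ s s', 0 ≤ (P ^ k) s s') ∧ (∀ s, ∑ s', (P ^ k) s s' = 1) := by
  induction k with
  | zero =>
    constructor
    · intro s s'
      simp [Matrix.one_apply]
      positivity
    · intro s
      simp [Matrix.one_apply]
  | succ k ih =>
    have hmul : P ^ (k + 1) = P ^ k * P := pow_succ P k
    constructor
    · intro s s'
      rw [hmul, Matrix.mul_apply]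
      exact Finset.sum_nonneg fun i _ => mul_nonneg (ih.1 s i) (hP_nonneg i s')
    · intro s
      rw [hmul]
      simp only [Matrix.mul_apply]
      rw [Finset.sum_comm]
      calc ∑ i, ∑ s', (P ^ k) s i * P i s' = ∑ i, (P ^ k) s i * ∑ s', P i s' := by
            simp [Finset.mul_sum]
        _ = 1 := by simp [hP_row, ih.2 s]

theorem stmt_11 {S : Type*} [Fintype S] [Nonempty S] [DecidableEq S]
    (γ : ℝ) (hγ₀ : 0 < γ) (hγ₁ : γ < 1) (n : ℕ) (hn : 1 ≤ n)
    (P : Matrix S S ℝ)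
    (hP_nonneg : ∀ s s', 0 ≤ P s s')
    (hP_row : ∀ s, ∑ s', P s s' = 1)
    (μ : S → ℝ) (hμ₀ : ∀ s, 0 < μ s) (hμ₁ : ∀ s, μ s ≤ 1)
    (μmin : ℝ) (hμmin : μmin = Finset.univ.inf' Finset.univ_nonempty μ) :
    ∀ θ₁ θ₂ : S → ℝ,
      ‖(fun s => θ₁ s + γ ^ (n + 1) * (μ s * (P ^ (n + 1)).mulVec θ₁ s) - μ s * θ₁ s) -
        (fun s => θ₂ s + γ ^ (n + 1) * (μ s * (P ^ (n + 1)).mulVec θ₂ s) - μ s * θ₂ s)‖ ≤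
        (1 - μmin * (1 - γ ^ (n + 1))) * ‖θ₁ - θ₂‖ := by
  intro θ₁ θ₂
  obtain ⟨hQn, hQr⟩ := pow_stochastic P hP_nonneg hP_row (n + 1)
  set Q := P ^ (n + 1) with hQ
  set δ := θ₁ - θ₂ with hδ
  have hγn : 0 < γ ^ (n + 1) := pow_pos hγ₀ _
  have hγn1 : γ ^ (n + 1) < 1 := pow_lt_one₀ (le_of_lt hγ₀) hγ₁ (Nat.succ_ne_zero n)
  -- μmin properties
  have hμmin_le : ∀ s, μmin ≤ μ s := by
    intro s; rw [hμmin]; exact Finset.inf'_le μ (Finset.mem_univ s)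
  have hμmin_pos : 0 < μmin := by
    rw [hμmin]
    apply Finset.lt_inf'_iff _ |>.mpr
    intro s _; exact hμ₀ s
  have hμmin_le1 : μmin ≤ 1 := le_trans (hμmin_le (Classical.arbitrary S)) (hμ₁ _)
  have hfac_nonneg : 0 ≤ 1 - μmin * (1 - γ ^ (n + 1)) := by nlinarith
  -- bound on mulVec
  have hδnorm : ∀ s, |δ s| ≤ ‖δ‖ := by
    intro s
    have := norm_le_pi_norm δ s
    simpa [Real.norm_eq_abs] using this
  have hmv : ∀ s, |Q.mulVec δ s| ≤ ‖δ‖ := by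
    intro s
    calc |Q.mulVec δ s| = |∑ s', Q s s' * δ s'| := by rfl
      _ ≤ ∑ s', |Q s s' * δ s'| := Finset.abs_sum_le_sum_abs _ _
      _ ≤ ∑ s', Q s s' * ‖δ‖ := by
          apply Finset.sum_le_sum
          intro i _
          rw [abs_mul, abs_of_nonneg (hQn s i)]
          exact mul_le_mul_of_nonneg_left (hδnorm i) (hQn s i)
      _ = ‖δ‖ := by rw [← Finset.sum_mul, hQr s, one_mul]
  rw [pi_norm_le_iff_of_nonneg (by positivity)]
  intro s
  have hsub : ((fun s => θ₁ s + γ ^ (n + 1) * (μ s * Q.mulVec θ₁ s) - μ s * θ₁ s) -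
      (fun s => θ₂ s + γ ^ (n + 1) * (μ s * Q.mulVec θ₂ s) - μ s * θ₂ s)) s
      = (1 - μ s) * δ s + γ ^ (n + 1) * μ s * Q.mulVec δ s := by
    have hmvsub : Q.mulVec δ s = Q.mulVec θ₁ s - Q.mulVec θ₂ s := by
      rw [hδ, Matrix.mulVec_sub]; rfl
    simp only [Pi.sub_apply, hδ]
    rw [hmvsub]; ring
  rw [Real.norm_eq_abs, hsub]
  have h1 : |(1 - μ s) * δ s + γ ^ (n + 1) * μ s * Q.mulVec δ s|
      ≤ (1 - μ s) * ‖δ‖ + γ ^ (n + 1) * μ s * ‖δ‖ := by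
    calc |(1 - μ s) * δ s + γ ^ (n + 1) * μ s * Q.mulVec δ s|
        ≤ |(1 - μ s) * δ s| + |γ ^ (n + 1) * μ s * Q.mulVec δ s| := abs_add_le _ _
      _ ≤ (1 - μ s) * ‖δ‖ + γ ^ (n + 1) * μ s * ‖δ‖ := by
          apply add_le_add
          · rw [abs_mul, abs_of_nonneg (by linarith [hμ₁ s])]
            exact mul_le_mul_of_nonneg_left (hδnorm s) (by linarith [hμ₁ s])
          · have hnn2 : (0:ℝ) ≤ γ ^ (n + 1) * μ s := mul_nonneg hγn.le (hμ₀ s).le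
            rw [abs_mul, abs_of_nonneg hnn2]
            exact mul_le_mul_of_nonneg_left (hmv s) hnn2
  refine h1.trans ?_
  have hnn : 0 ≤ ‖δ‖ := norm_nonneg δ
  nlinarith [mul_nonneg (mul_nonneg (sub_nonneg.mpr (hμmin_le s)) (by linarith : (0:ℝ) ≤ 1 - γ ^ (n + 1))) hnn]
end

section
/- Consider the Q-learning expected operator: for a finite state-action space S × A, discount γ ∈ (0,1), stationary distribution μ on S × A with μ_min = min_{s,a} μ(s,a) > 0, transition kernel P(·|s,a), and optimal Q-function Q*, define Ḡ(θ)(s,a) = θ(s,a) + μ(s,a)·E_{S'∼P(·|s,a)}[γ max_{a'}(θ + Q*)(S',a') − θ(s,a) − γ max_{a'} Q*(S',a')]. Then Ḡ is a sup-norm contraction with factor 1 − (1−γ)μ_min: ‖Ḡ(θ₁) − Ḡ(θ₂)‖_∞ ≤ (1 − (1−γ)μ_min)‖θ₁ − θ₂‖_∞ for all θ₁, θ₂ ∈ ℝ^{S×A}. -/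
theorem stmt_12 {S A : Type*} [Fintype S] [Fintype A] [Nonempty S] [Nonempty A]
    (γ : ℝ) (hγ₀ : 0 < γ) (hγ₁ : γ < 1)
    (P : S × A → S → ℝ)
    (hP_nonneg : ∀ p s', 0 ≤ P p s')
    (hP_sum : ∀ p, ∑ s', P p s' = 1)
    (Qstar : S × A → ℝ)
    (μ : S × A → ℝ) (hμ₀ : ∀ p, 0 < μ p) (hμ₁ : ∀ p, μ p ≤ 1)
    (μmin : ℝ) (hμmin : μmin = Finset.univ.inf' Finset.univ_nonempty μ) :
    ∀ θ₁ θ₂ : S × A → ℝ,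
      ‖(fun p => θ₁ p + μ p * ∑ s', P p s' *
            (γ * Finset.univ.sup' Finset.univ_nonempty (fun a' => θ₁ (s', a') + Qstar (s', a'))
              - θ₁ p - γ * Finset.univ.sup' Finset.univ_nonempty (fun a' => Qstar (s', a')))) -
        (fun p => θ₂ p + μ p * ∑ s', P p s' *
            (γ * Finset.univ.sup' Finset.univ_nonempty (fun a' => θ₂ (s', a') + Qstar (s', a'))
              - θ₂ p - γ * Finset.univ.sup' Finset.univ_nonempty (fun a' => Qstar (s', a'))))‖ ≤
        (1 - (1 - γ) * μmin) * ‖θ₁ - θ₂‖ := by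
  intro θ₁ θ₂
  set D := ‖θ₁ - θ₂‖ with hD
  have hD0 : 0 ≤ D := norm_nonneg _
  have hδ : ∀ p, |θ₁ p - θ₂ p| ≤ D := by
    intro p
    have := norm_le_pi_norm (θ₁ - θ₂) p
    simpa [Real.norm_eq_abs] using this
  have hμmin_le : ∀ p, μmin ≤ μ p := by
    intro p; rw [hμmin]; exact Finset.inf'_le _ (Finset.mem_univ p)
  have hμmin_pos : 0 < μmin := by
    rw [hμmin, Finset.lt_inf'_iff]
    exact fun p _ => hμ₀ p
  have hμmin_le1 : μmin ≤ 1 := le_trans (hμmin_le (Classical.arbitrary _)) (hμ₁ _)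
  have hγle : γ ≤ 1 - (1 - γ) * μmin := by nlinarith
  have hC0 : 0 ≤ (1 - (1 - γ) * μmin) * D := mul_nonneg (le_trans hγ₀.le hγle) hD0
  rw [pi_norm_le_iff_of_nonneg hC0]
  intro p
  set N : S → ℝ := fun s' => Finset.univ.sup' Finset.univ_nonempty (fun a' => Qstar (s', a'))
  set M : (S × A → ℝ) → S → ℝ := fun θ s' =>
    Finset.univ.sup' Finset.univ_nonempty (fun a' => θ (s', a') + Qstar (s', a')) with hM
  have key : ∀ u v : A → ℝ, (∀ a, u a ≤ v a + D) →
      Finset.univ.sup' Finset.univ_nonempty u - Finset.univ.sup' Finset.univ_nonempty v ≤ D := by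
    intro u v h
    rw [sub_le_iff_le_add]
    apply Finset.sup'_le
    intro a _
    have := Finset.le_sup' v (Finset.mem_univ a)
    linarith [h a]
  have hMbd : ∀ s', |M θ₁ s' - M θ₂ s'| ≤ D := by
    intro s'
    rw [abs_sub_le_iff]
    constructor
    · exact key _ _ fun a => by have := abs_le.1 (hδ (s', a)); linarith [this.2]
    · exact key _ _ fun a => by have := abs_le.1 (hδ (s', a)); linarith [this.1]
  have hsum : ∀ θ : S × A → ℝ,
      ∑ s', P p s' * (γ * M θ s' - θ p - γ * N s')
        = γ * ∑ s', P p s' * M θ s' - θ p - γ * ∑ s', P p s' * N s' := by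
    intro θ
    have h1 : ∑ s', P p s' * (γ * M θ s' - θ p - γ * N s')
        = ∑ s', (γ * (P p s' * M θ s') - P p s' * θ p - γ * (P p s' * N s')) :=
      Finset.sum_congr rfl (fun s' _ => by ring)
    rw [h1, Finset.sum_sub_distrib, Finset.sum_sub_distrib, ← Finset.mul_sum, ← Finset.mul_sum,
      ← Finset.sum_mul, hP_sum p]
    ring
  have hdiff : (θ₁ p + μ p * ∑ s', P p s' * (γ * M θ₁ s' - θ₁ p - γ * N s'))
      - (θ₂ p + μ p * ∑ s', P p s' * (γ * M θ₂ s' - θ₂ p - γ * N s'))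
      = (1 - μ p) * (θ₁ p - θ₂ p) + μ p * γ * ∑ s', P p s' * (M θ₁ s' - M θ₂ s') := by
    rw [hsum θ₁, hsum θ₂]
    have : ∑ s', P p s' * (M θ₁ s' - M θ₂ s')
        = ∑ s', P p s' * M θ₁ s' - ∑ s', P p s' * M θ₂ s' := by
      rw [← Finset.sum_sub_distrib]
      exact Finset.sum_congr rfl (fun s' _ => by ring)
    rw [this]; ring
  have hsumbd : |∑ s', P p s' * (M θ₁ s' - M θ₂ s')| ≤ D := by
    calc |∑ s', P p s' * (M θ₁ s' - M θ₂ s')| ≤ ∑ s', |P p s' * (M θ₁ s' - M θ₂ s')| :=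
          Finset.abs_sum_le_sum_abs _ _
      _ ≤ ∑ s', P p s' * D := by
          apply Finset.sum_le_sum
          intro s' _
          rw [abs_mul, abs_of_nonneg (hP_nonneg p s')]
          exact mul_le_mul_of_nonneg_left (hMbd s') (hP_nonneg p s')
      _ = D := by rw [← Finset.sum_mul, hP_sum p, one_mul]
  have hμp := hμ₀ p
  have hμp1 := hμ₁ p
  have habs := abs_le.1 (hδ p)
  have habs2 := abs_le.1 hsumbd
  simp only [Pi.sub_apply, Real.norm_eq_abs]
  rw [hdiff, abs_le]
  have h1μ : (0:ℝ) ≤ 1 - μ p := by linarith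
  have h1γ : (0:ℝ) ≤ 1 - γ := by linarith
  have hkey := mul_le_mul_of_nonneg_right (hμmin_le p) (mul_nonneg h1γ hD0)
  constructor
  · nlinarith [mul_le_mul_of_nonneg_left habs.1 h1μ,
      mul_le_mul_of_nonneg_left habs2.1 (mul_nonneg hμp.le hγ₀.le)]
  · nlinarith [mul_le_mul_of_nonneg_left habs.2 h1μ,
      mul_le_mul_of_nonneg_left habs2.2 (mul_nonneg hμp.le hγ₀.le)]
end
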